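/- Let N ≥ 1, let T_1 ⊆ T_2 ⊆ ⋯ ⊆ T_N be nested nonempty measurable subsets of 𝕋 (the focal elements of the prior random set), and let m_1, …, m_N ≥ 0 with Σ_j m_j = 1 (the masses). Define the prior upper probability Q̄(B) = Σ_{j : T_j ∩ B ≠ ∅} m_j and the credal set 𝒬 = {Q a probability measure on 𝕋 : Q(B) ≤ Q̄(B) for every measurable B}. Let Π̄⁰ be a vacuous-prior IM output: each Π̄⁰_y : Set 𝕋 → [0,1] is monotone with Π̄⁰_y(∅) = 0, y ↦ Π̄⁰_y(B) is measurable for each measurable B, and validity holds at the assertion A below: P θ {y : Π̄⁰_y(A) ≤ t} ≤ t for every θ ∈ A and t ∈ [0,1]. Define the Dempster's-rule combined upper probability Π̄^D_y(B) = (Σ_j m_j · Π̄⁰_y(B ∩ T_j)) / (Σ_j m_j · Π̄⁰_y(T_j)), and assume Σ_j m_j · Π̄⁰_y(T_j) > 0 for every y. Let A ⊆ 𝕋 be a nonempty measurable set for which there exists k such that A ∩ T_j = ∅ for all j < k and A ⊆ T_j for all j ≥ k. Then for every α ∈ [0,1]: ⨆_{Q ∈ 𝒬} (Q ⊗ P){(θ,y)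 : Π̄^D_y(A) ≤ α and θ ∈ A} ≤ α. -/

import Mathlib

open MeasureTheory ProbabilityTheory Set Classical
open scoped ENNReal

/-- The prior upper probability of the random set with focal elements `T 1, …, T N` and
masses `m 1, …, m N`: `Q̄(B) = ∑_{j : T j ∩ B ≠ ∅} m j`. -/
noncomputable def QbarRS {𝕋 : Type*} (N : ℕ) (T : Fin N → Set 𝕋) (m : Fin N → ℝ≥0∞)
    (B : Set 𝕋) : ℝ≥0∞ :=
  ∑ j, if (T j ∩ B).Nonempty then m j else 0

/-!
Let `w = ∑_{j ≥ k} m j` be the mass of the focal elements containing `A`; the others miss `A`,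
so every `Q ∈ 𝒬` has `Q A ≤ Q̄(A) ≤ w`. The denominator of `Π̄^D_y` lies in `(0, 1]` and its
numerator is at least `w · Π̄⁰_y(A)`, so `Π̄^D_y(A) ≤ α` forces `Π̄⁰_y(A) ≤ α / w`. Validity of
`Π̄⁰` bounds the `P θ`-probability of that event by `α / w` for `θ ∈ A`, and integrating over `A`
against `Q` gives at most `(α / w) · Q A ≤ α`.
-/

theorem QbarRS_le_sum_of_inter_eq_empty {𝕋 : Type*} {N : ℕ} {T : Fin N → Set 𝕋}
    {m : Fin N → ℝ≥0∞} {B : Set 𝕋} (s : Finset (Fin N)) (hB : ∀ j ∉ s, B ∩ T j = ∅) :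
    QbarRS N T m B ≤ ∑ j ∈ s, m j := by
  rw [← Finset.univ_inter s, ← Finset.sum_ite_mem]
  refine Finset.sum_le_sum fun j _ => ?_
  by_cases hj : j ∈ s
  · simp only [hj, if_true]
    split <;> simp
  · simp [hj, inter_comm, hB j hj]

theorem sum_mul_le_sum_mul_inter {ι 𝕋 : Type*} [Fintype ι] (m : ι → ℝ≥0∞) (T : ι → Set 𝕋)
    (f : Set 𝕋 → ℝ≥0∞) {A : Set 𝕋} (s : Finset ι) (hA : ∀ j ∈ s, A ⊆ T j) :
    (∑ j ∈ s, m j) * f A ≤ ∑ j, m j * f (A ∩ T j) :=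
  calc (∑ j ∈ s, m j) * f A = ∑ j ∈ s, m j * f (A ∩ T j) := by
        rw [Finset.sum_mul]
        exact Finset.sum_congr rfl fun j hj => by rw [inter_eq_left.2 (hA j hj)]
    _ ≤ ∑ j, m j * f (A ∩ T j) := Finset.sum_le_sum_of_subset (Finset.subset_univ s)

theorem ENNReal.le_of_div_le_of_le_one {a b c : ℝ≥0∞} (h : a / b ≤ c) (hb0 : b ≠ 0)
    (hb1 : b ≤ 1) : a ≤ c :=
  ((ENNReal.div_le_iff hb0 (ne_top_of_le_ne_top one_ne_top hb1)).1 h).trans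
    (mul_le_of_le_one_right' hb1)

theorem sum_mul_le_of_sum_mul_inter_div_le {ι 𝕋 : Type*} [Fintype ι] {m : ι → ℝ≥0∞}
    (hm : ∑ j, m j = 1) {T : ι → Set 𝕋} {f : Set 𝕋 → ℝ≥0∞} (hf : ∀ B, f B ≤ 1)
    (hden : ∑ j, m j * f (T j) ≠ 0) {A : Set 𝕋} (s : Finset ι) (hA : ∀ j ∈ s, A ⊆ T j)
    {α : ℝ≥0∞} (h : (∑ j, m j * f (A ∩ T j)) / (∑ j, m j * f (T j)) ≤ α) :
    (∑ j ∈ s, m j) * f A ≤ α :=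
  (sum_mul_le_sum_mul_inter m T f s hA).trans <| ENNReal.le_of_div_le_of_le_one h hden <|
    (Finset.sum_le_sum fun _ _ => mul_le_of_le_one_right' (hf _)).trans_eq hm

theorem measure_const_mul_le_le_div {𝕐 : Type*} [MeasurableSpace 𝕐] {μ : Measure 𝕐}
    [IsProbabilityMeasure μ] {g : 𝕐 → ℝ≥0∞} (hg : ∀ t ≤ 1, μ {y | g y ≤ t} ≤ t)
    {w : ℝ≥0∞} (hw0 : w ≠ 0) (hw_top : w ≠ ∞) (α : ℝ≥0∞) :
    μ {y | w * g y ≤ α} ≤ α / w := by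
  have hset : {y | w * g y ≤ α} = {y | g y ≤ α / w} := by
    ext y
    rw [mem_ofPred_eq, mem_ofPred_eq, ENNReal.le_div_iff_mul_le (Or.inl hw0) (Or.inl hw_top),
      mul_comm]
  rw [hset]
  rcases le_or_gt (α / w) 1 with hle | hlt
  · exact hg _ hle
  · exact prob_le_one.trans hlt.le

theorem Measure.compProd_prod_le_mul {α β : Type*} [MeasurableSpace α] [MeasurableSpace β]
    {μ : Measure α} [SFinite μ] {κ : Kernel α β} [IsSFiniteKernel κ] {s : Set α} {t : Set β}
    (hs : MeasurableSet s) (ht : MeasurableSet t) {c : ℝ≥0∞} (hc : ∀ a ∈ s, κ a t ≤ c) :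
    (μ ⊗ₘ κ) (s ×ˢ t) ≤ c * μ s := by
  rw [Measure.compProd_apply_prod hs ht]
  calc ∫⁻ a in s, κ a t ∂μ ≤ ∫⁻ _ in s, c ∂μ := setLIntegral_mono measurable_const hc
    _ = c * μ s := setLIntegral_const s c

theorem stmt12_general {𝕋 𝕐 : Type*} [MeasurableSpace 𝕋] [MeasurableSpace 𝕐]
    (P : Kernel 𝕋 𝕐) [IsMarkovKernel P]
    (N : ℕ)
    (T : Fin N → Set 𝕋)
    (m : Fin N → ℝ≥0∞) (hm : ∑ j, m j = 1)
    (Pi0 : 𝕐 → Set 𝕋 → ℝ≥0∞)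
    (hle1 : ∀ y B, Pi0 y B ≤ 1)
    (hmeas : ∀ B : Set 𝕋, MeasurableSet B → Measurable fun y => Pi0 y B)
    (A : Set 𝕋) (hAmeas : MeasurableSet A)
    (hvalid : ∀ θ ∈ A, ∀ t : ℝ≥0∞, t ≤ 1 → P θ {y | Pi0 y A ≤ t} ≤ t)
    (hden : ∀ y, 0 < ∑ j, m j * Pi0 y (T j))
    (k : Fin N) (hk : ∀ j : Fin N, (j < k → A ∩ T j = ∅) ∧ (k ≤ j → A ⊆ T j))
    (α : ℝ≥0∞) :
    (⨆ Q ∈ {Q : Measure 𝕋 | IsProbabilityMeasure Q ∧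
        ∀ B : Set 𝕋, MeasurableSet B → Q B ≤ QbarRS N T m B},
      (Q ⊗ₘ P) {p : 𝕋 × 𝕐 |
        (∑ j, m j * Pi0 p.2 (A ∩ T j)) / (∑ j, m j * Pi0 p.2 (T j)) ≤ α ∧
          p.1 ∈ A}) ≤ α := by
  refine iSup₂_le fun Q ⟨hQprob, hQle⟩ => ?_
  set w := ∑ j ∈ Finset.Ici k, m j
  have hQA : Q A ≤ w := (hQle A hAmeas).trans <| QbarRS_le_sum_of_inter_eq_empty _ fun j hj =>
    (hk j).1 (not_le.1 fun h => hj (Finset.mem_Ici.2 h))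
  have hw_top : w ≠ ∞ := ne_top_of_le_ne_top ENNReal.one_ne_top <|
    (Finset.sum_le_sum_of_subset (Finset.subset_univ _)).trans_eq hm
  let F : Set 𝕐 := {y | w * Pi0 y A ≤ α}
  have hsub : {p : 𝕋 × 𝕐 | (∑ j, m j * Pi0 p.2 (A ∩ T j)) / (∑ j, m j * Pi0 p.2 (T j)) ≤ α ∧
      p.1 ∈ A} ⊆ A ×ˢ F := fun p ⟨hratio, hpA⟩ =>
    ⟨hpA, sum_mul_le_of_sum_mul_inter_div_le hm (hle1 p.2) (hden p.2).ne' _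
      (fun j hj => (hk j).2 (Finset.mem_Ici.1 hj)) hratio⟩
  have hFmeas : MeasurableSet F := measurableSet_le ((hmeas A hAmeas).const_mul w) measurable_const
  refine (measure_mono hsub).trans ?_
  rcases eq_or_ne w 0 with hw0 | hw0
  · calc (Q ⊗ₘ P) (A ×ˢ F) ≤ 1 * Q A :=
          Measure.compProd_prod_le_mul hAmeas hFmeas fun _ _ => prob_le_one
      _ ≤ α := by simp [le_antisymm (hQA.trans_eq hw0) zero_le]
  · calc (Q ⊗ₘ P) (A ×ˢ F) ≤ α / w * Q A :=
          Measure.compProd_prod_le_mul hAmeas hFmeas fun θ hθ =>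
            measure_const_mul_le_le_div (hvalid θ hθ) hw0 hw_top α
      _ ≤ α / w * w := by gcongr
      _ = α := ENNReal.div_mul_cancel hw0 hw_top

/-- Proposition 6: combining a valid vacuous-prior IM with a nested, finite-support
prior random set (focal elements `T 1 ⊆ ⋯ ⊆ T N`, masses `m j`) via Dempster's rule,
`Π̄^D_y(B) = (∑_j m_j Π̄⁰_y(B ∩ T_j)) / (∑_j m_j Π̄⁰_y(T_j))`, yields an IM that is valid
at every assertion `A` lying in a single layer of the nested focal elements
(`A ∩ T j = ∅` for `j < k` and `A ⊆ T j` for `j ≥ k`), relative to the credal set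
`𝒬 = {Q : Q(B) ≤ Q̄(B) for all measurable B}`. -/
theorem stmt12 {𝕋 𝕐 : Type*} [MeasurableSpace 𝕋] [MeasurableSpace 𝕐]
    (P : Kernel 𝕋 𝕐) [IsMarkovKernel P]
    (N : ℕ) (hN : 1 ≤ N)
    (T : Fin N → Set 𝕋)
    (hTnested : ∀ i j : Fin N, i ≤ j → T i ⊆ T j)
    (hTne : ∀ j, (T j).Nonempty) (hTmeas : ∀ j, MeasurableSet (T j))
    (m : Fin N → ℝ≥0∞) (hm : ∑ j, m j = 1)
    (Pi0 : 𝕐 → Set 𝕋 → ℝ≥0∞)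
    (hmono : ∀ y : 𝕐, ∀ B B' : Set 𝕋, B ⊆ B' → Pi0 y B ≤ Pi0 y B')
    (hempty : ∀ y, Pi0 y (∅ : Set 𝕋) = 0) (hle1 : ∀ y B, Pi0 y B ≤ 1)
    (hmeas : ∀ B : Set 𝕋, MeasurableSet B → Measurable fun y => Pi0 y B)
    (A : Set 𝕋) (hAne : A.Nonempty) (hAmeas : MeasurableSet A)
    (hvalid : ∀ θ ∈ A, ∀ t : ℝ≥0∞, t ≤ 1 → P θ {y | Pi0 y A ≤ t} ≤ t)
    (hden : ∀ y, 0 < ∑ j, m j * Pi0 y (T j))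
    (k : Fin N) (hk : ∀ j : Fin N, (j < k → A ∩ T j = ∅) ∧ (k ≤ j → A ⊆ T j))
    (α : ℝ≥0∞) (hα : α ≤ 1) :
    (⨆ Q ∈ {Q : Measure 𝕋 | IsProbabilityMeasure Q ∧
        ∀ B : Set 𝕋, MeasurableSet B → Q B ≤ QbarRS N T m B},
      (Q ⊗ₘ P) {p : 𝕋 × 𝕐 |
        (∑ j, m j * Pi0 p.2 (A ∩ T j)) / (∑ j, m j * Pi0 p.2 (T j)) ≤ α ∧
          p.1 ∈ A}) ≤ α :=
  stmt12_general P N T m hm Pi0 hle1 hmeas A hAmeas hvalid hden k hk α
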